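/- arXiv:1407.0457 — 2 statements merged into one kernel-verified Lean document; each statement's English description precedes it below -/
import Mathlib

section
/- Let E be a normed vector space, X a topological space, Z a topological space, and q : E × X → Z a continuous surjection such that q(ξ, x) = q(η, y) implies x = y; let θ : Z → X denote the induced base-point map (so θ(q(ξ, x)) = x for all ξ ∈ E, x ∈ X), and define N : Z → ℝ by N(z) = inf{‖ξ‖ : ξ ∈ E with q(ξ, θ(z)) = z}. Let x₀ ∈ X, let l be a filter on an index set ι, and let b : ι → Z be such that N(b(i)) tends to 0 along l and θ(b(i)) tends to x₀ along l. Then b(i) tends to q(0, x₀) along l. -/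
/- A neighbourhood of `q (0, x₀)` pulls back to a neighbourhood of `(0, x₀)`, which contains a
box `ball 0 ε ×ˢ t`; a point whose fibre norm is below `ε` and whose base point lies in `t` has a
lift in that box. -/

open Filter Topology Metric

theorem tendsto_nhds_of_eventually_mem_image_ball_prod {E X Z ι : Type*}
    [SeminormedAddCommGroup E] [TopologicalSpace X] [TopologicalSpace Z]
    {q : E × X → Z} {x₀ : X} (hq : ContinuousAt q (0, x₀)) {l : Filter ι} {b : ι → Z}
    (h : ∀ ε > 0, ∀ t ∈ 𝓝 x₀, ∀ᶠ i in l, b i ∈ q '' (ball 0 ε ×ˢ t)) :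
    Tendsto b l (𝓝 (q (0, x₀))) := by
  have hbasis : (𝓝 ((0 : E), x₀)).HasBasis (fun p : ℝ × Set X => 0 < p.1 ∧ p.2 ∈ 𝓝 x₀)
      (fun p => ball 0 p.1 ×ˢ p.2) := by
    rw [nhds_prod_eq]
    exact nhds_basis_ball.prod (𝓝 x₀).basis_sets
  exact ((hbasis.map q).tendsto_right_iff.mpr fun p hp => h p.1 hp.1 p.2 hp.2).mono_right hq

theorem exists_lift_norm_lt_of_sInf_lt {E X Z : Type*} [SeminormedAddCommGroup E]
    {q : E × X → Z} (hqs : Function.Surjective q) {θ : Z → X}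
    (hθ : ∀ (ξ : E) (x : X), θ (q (ξ, x)) = x) {z : Z} {ε : ℝ}
    (h : sInf {r : ℝ | ∃ ξ : E, q (ξ, θ z) = z ∧ ‖ξ‖ = r} < ε) :
    ∃ ξ : E, q (ξ, θ z) = z ∧ ‖ξ‖ < ε := by
  -- without surjectivity the set could be empty, with junk infimum `sInf ∅ = 0`
  have hne : {r : ℝ | ∃ ξ : E, q (ξ, θ z) = z ∧ ‖ξ‖ = r}.Nonempty := by
    obtain ⟨⟨ξ, x⟩, rfl⟩ := hqs z
    exact ⟨‖ξ‖, ξ, by rw [hθ], rfl⟩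
  obtain ⟨_, ⟨ξ, hξ, rfl⟩, hξε⟩ := exists_lt_of_csInf_lt hne h
  exact ⟨ξ, hξ, hξε⟩

theorem tendsto_zero_section_of_fibre_norm_tendsto_zero_general
    {E X Z : Type*} [NormedAddCommGroup E] [TopologicalSpace X] [TopologicalSpace Z]
    (q : E × X → Z) (hqc : Continuous q) (hqs : Function.Surjective q)
    (θ : Z → X) (hθ : ∀ (ξ : E) (x : X), θ (q (ξ, x)) = x)
    (N : Z → ℝ)
    (hN : ∀ z : Z, N z = sInf {r : ℝ | ∃ ξ : E, q (ξ, θ z) = z ∧ ‖ξ‖ = r})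
    {ι : Type*} (l : Filter ι) (b : ι → Z) (x₀ : X)
    (hNb : Filter.Tendsto (fun i => N (b i)) l (nhds 0))
    (hθb : Filter.Tendsto (fun i => θ (b i)) l (nhds x₀)) :
    Filter.Tendsto b l (nhds (q (0, x₀))) := by
  refine tendsto_nhds_of_eventually_mem_image_ball_prod hqc.continuousAt fun ε hε t ht => ?_
  filter_upwards [hNb.eventually (gt_mem_nhds hε), hθb ht] with i hNi hti
  obtain ⟨ξ, hξ, hξε⟩ := exists_lift_norm_lt_of_sInf_lt hqs hθ (hN (b i) ▸ hNi)
  exact ⟨(ξ, θ (b i)), ⟨mem_ball_zero_iff.mpr hξε, hti⟩, hξ⟩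

/-- Lemma 4.11 (abstract form): in a fibrewise quotient `q : E × X → Z` of a trivial
normed bundle (with base-point map `θ` and fibre norm `N`), any net whose fibre norms
tend to `0` and whose base points tend to `x₀` converges to the zero element
`q (0, x₀)` of the fibre over `x₀`. -/
theorem tendsto_zero_section_of_fibre_norm_tendsto_zero
    {E X Z : Type*} [NormedAddCommGroup E] [TopologicalSpace X] [TopologicalSpace Z]
    (q : E × X → Z) (hqc : Continuous q) (hqs : Function.Surjective q)
    (hfib : ∀ (ξ η : E) (x y : X), q (ξ, x) = q (η, y) → x = y)
    (θ : Z → X) (hθ : ∀ (ξ : E) (x : X), θ (q (ξ, x)) = x)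
    (N : Z → ℝ)
    (hN : ∀ z : Z, N z = sInf {r : ℝ | ∃ ξ : E, q (ξ, θ z) = z ∧ ‖ξ‖ = r})
    {ι : Type*} (l : Filter ι) (b : ι → Z) (x₀ : X)
    (hNb : Filter.Tendsto (fun i => N (b i)) l (nhds 0))
    (hθb : Filter.Tendsto (fun i => θ (b i)) l (nhds x₀)) :
    Filter.Tendsto b l (nhds (q (0, x₀))) :=
  tendsto_zero_section_of_fibre_norm_tendsto_zero_general q hqc hqs θ hθ N hN l b x₀ hNb hθb
end

section
/- For all x, y, s ∈ G one has 𝓗_{xs, ys} = 𝓗_{x,y} (equality of linear spans, and consequently of their closures). In particular the subspaces 𝓗_{x,y}, and hence the quotient spaces 𝒜_{x,y} = (E ⊗ F)/𝓗_{x,y}, depend only on the right coset of (x, y) under the diagonal subgroup Δ = {(s, s) : s ∈ G} of G × G. -/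
open TensorProduct

/-- The subspace `𝓗_{x,y}` of `E ⊗ F`: the span of the elements
`π^x(b) ξ ⊗ η − ξ ⊗ σ^y(b⁻¹) η` for `b ∈ H^x ∩ K^y` (where `H^x = x⁻¹Hx`,
`π^x(b) = π(xbx⁻¹)`, `K^y = y⁻¹Ky`, `σ^y(c) = σ(ycy⁻¹)`). -/
def Hxy {G E F : Type*} [Group G] [AddCommGroup E] [Module ℂ E]
    [AddCommGroup F] [Module ℂ F] (H K : Subgroup G)
    (π : H →* (E ≃ₗ[ℂ] E)) (σ : K →* (F ≃ₗ[ℂ] F)) (x y : G) :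
    Submodule ℂ (E ⊗[ℂ] F) :=
  Submodule.span ℂ
    { t | ∃ (b : G) (hbH : x * b * x⁻¹ ∈ H) (hbK : y * b * y⁻¹ ∈ K) (ξ : E) (η : F),
        t = (π ⟨x * b * x⁻¹, hbH⟩ ξ) ⊗ₜ[ℂ] η
            - ξ ⊗ₜ[ℂ] (σ (⟨y * b * y⁻¹, hbK⟩⁻¹) η) }

section
variable {G E F : Type*} [Group G] [AddCommGroup E] [Module ℂ E]
    [AddCommGroup F] [Module ℂ F] (H K : Subgroup G)
    (π : H →* (E ≃ₗ[ℂ] E)) (σ : K →* (F ≃ₗ[ℂ] F))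

theorem Hxy_mul_right_le (x y s : G) :
    Hxy H K π σ (x * s) (y * s) ≤ Hxy H K π σ x y := by
  refine Submodule.span_mono ?_
  rintro _ ⟨b, hbH, hbK, ξ, η, rfl⟩
  have conj_eq (z : G) : z * (s * b * s⁻¹) * z⁻¹ = z * s * b * (z * s)⁻¹ := by group
  refine ⟨s * b * s⁻¹, conj_eq x ▸ hbH, conj_eq y ▸ hbK, ξ, η, ?_⟩
  simp only [conj_eq]

end

/-- Proposition 4.4: `𝓗_{xs,ys} = 𝓗_{x,y}` for all `x, y, s ∈ G`; hence the
subspaces `𝓗_{x,y}`, and the quotients `𝒜_{x,y} = (E ⊗ F)/𝓗_{x,y}`, depend only on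
the right coset of `(x, y)` under the diagonal subgroup of `G × G`. -/
theorem Hxy_mul_right_eq {G E F : Type*} [Group G] [AddCommGroup E] [Module ℂ E]
    [AddCommGroup F] [Module ℂ F] (H K : Subgroup G)
    (π : H →* (E ≃ₗ[ℂ] E)) (σ : K →* (F ≃ₗ[ℂ] F)) (x y s : G) :
    Hxy H K π σ (x * s) (y * s) = Hxy H K π σ x y := by
  refine le_antisymm (Hxy_mul_right_le H K π σ x y s) ?_
  simpa only [mul_inv_cancel_right] using Hxy_mul_right_le H K π σ (x * s) (y * s) s⁻¹
end
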